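/- arXiv:1701.02167 — 5 statements merged into one kernel-verified Lean document; each statement's English description precedes it below -/
import Mathlib

section
/- Let T > 0, let h : ℝ → ℝ be Lipschitz continuous, let α : [0,T] → ℝ be continuous, let y₀ ∈ ℝ, and let Θ : [0,T] → ℝ be càdlàg. Then there exists a unique càdlàg function Y : [0,T] → ℝ such that Y(t) = y₀ + (Θ(t) − Θ(0)) − ∫_0^t h(Y(s))·α(s) ds for all t ∈ [0,T]. -/
/-!
Writing `Y = y₀ + Θ - Θ 0 + Z`, the equation becomes the Volterra equation
`Z t = -∫₀ᵗ α s · h(y₀ + Θ s - Θ 0 + Z s) ds`, whose integrand is `K`-Lipschitz in the state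
uniformly in time, but only bounded and measurable in time: a càdlàg function is bounded on
`[0,T]`, and Borel because it is right-continuous. On `C([0,T])` the `n`-th iterate of the Picard
operator is Lipschitz with constant `(K T)ⁿ / n!`, so the operator has a unique fixed point.
Conversely, for any càdlàg solution `Y` the function `Z` is a primitive, hence continuous, hence
that fixed point.
-/

open Filter Set MeasureTheory Topology

noncomputable section

/-- A function `x : ℝ → ℝ` is càdlàg on `[0,T]`: right-continuous at every `t ∈ [0,T)`
and with a (finite) left limit at every `t ∈ (0,T]`. -/
def Cadlag (T : ℝ) (x : ℝ → ℝ) : Prop :=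
  (∀ t ∈ Set.Ico (0:ℝ) T, Filter.Tendsto x (nhdsWithin t (Set.Ici t)) (nhds (x t))) ∧
  (∀ t ∈ Set.Ioc (0:ℝ) T, ∃ L : ℝ, Filter.Tendsto x (nhdsWithin t (Set.Iio t)) (nhds L))

/-- `Y` is the market impact process on `[0,T]` driven by the càdlàg strategy `Θ`,
i.e. the càdlàg solution of `dY = -h(Y) α dt + dΘ` with `Y(0-) = y₀`. -/
def ImpactSol (T : ℝ) (h α : ℝ → ℝ) (y₀ : ℝ) (Θ Y : ℝ → ℝ) : Prop :=
  Cadlag T Y ∧ ∀ t ∈ Set.Icc (0:ℝ) T,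
    Y t = y₀ + (Θ t - Θ 0) - ∫ s in (0:ℝ)..t, h (Y s) * α s

open Bornology

theorem measurable_of_continuousWithinAt_Ici {β : Type*} [TopologicalSpace β]
    [TopologicalSpace.PseudoMetrizableSpace β] [MeasurableSpace β] [BorelSpace β] {f : ℝ → β}
    (hf : ∀ t, ContinuousWithinAt f (Ici t) t) : Measurable f := by
  set grid : ℕ → ℝ → ℝ := fun n s => ⌈(n + 1 : ℝ) * s⌉ / (n + 1)
  have tendsto_grid : ∀ s, Tendsto (fun n => grid n s) atTop (𝓝[≥] s) := by
    intro s
    have lower : ∀ n : ℕ, s ≤ grid n s := fun n => by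
      rw [le_div_iff₀ (by positivity)]
      linarith [Int.le_ceil ((n + 1 : ℝ) * s)]
    have upper : ∀ n : ℕ, grid n s ≤ s + 1 / (n + 1) := fun n => by
      calc grid n s ≤ ((n + 1) * s + 1) / (n + 1) :=
            div_le_div_of_nonneg_right (Int.ceil_lt_add_one _).le (by positivity)
        _ = s + 1 / (n + 1) := by field_simp
    refine tendsto_nhdsWithin_iff.2 ⟨tendsto_of_tendsto_of_tendsto_of_le_of_le tendsto_const_nhds
      ?_ lower upper, Eventually.of_forall lower⟩
    simpa using tendsto_const_nhds.add (tendsto_one_div_add_atTop_nhds_zero_nat (𝕜 := ℝ))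
  refine measurable_of_tendsto_metrizable (f := fun n s => f (grid n s)) (fun n => ?_)
    (tendsto_pi_nhds.2 fun s => (hf s).tendsto.comp (tendsto_grid s))
  exact (measurable_from_top (f := fun k : ℤ => f (k / (n + 1)))).comp
    (Int.measurable_ceil.comp (measurable_const_mul _))

theorem IsCompact.isBounded_image_of_continuousWithinAt_Ici {β : Type*} [PseudoMetricSpace β]
    {f : ℝ → β} {K : Set ℝ} (hK : IsCompact K) (hright : ∀ t, ContinuousWithinAt f (Ici t) t)
    (hleft : ∀ t, ∃ l, Tendsto f (𝓝[<] t) (𝓝 l)) : IsBounded (f '' K) := by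
  have hdisj : Disjoint (𝓝ˢ K) (comap f (cobounded β)) := by
    refine hK.disjoint_nhdsSet_left.2 fun t _ => ?_
    obtain ⟨l, hl⟩ := hleft t
    rw [← nhdsLT_sup_nhdsGE, disjoint_sup_left]
    exact ⟨hl.disjoint (Metric.disjoint_nhds_cobounded l) tendsto_comap,
      (hright t).tendsto.disjoint (Metric.disjoint_nhds_cobounded _) tendsto_comap⟩
  have := disjoint_comap_iff_map.1 (hdisj.mono_left (principal_le_nhdsSet (s := K)))
  rwa [map_principal, disjoint_principal_left, ← isBounded_def] at this

section Cadlag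

variable {T : ℝ} {x y : ℝ → ℝ}

theorem Continuous.cadlag (hx : Continuous x) : Cadlag T x :=
  ⟨fun _ _ => hx.continuousWithinAt,
    fun t _ => ⟨x t, hx.continuousAt.tendsto.mono_left nhdsWithin_le_nhds⟩⟩

theorem Continuous.comp_cadlag {g : ℝ → ℝ} (hg : Continuous g) (hx : Cadlag T x) :
    Cadlag T (g ∘ x) :=
  ⟨fun t ht => (hg.tendsto _).comp (hx.1 t ht),
    fun t ht => let ⟨l, hl⟩ := hx.2 t ht; ⟨g l, (hg.tendsto l).comp hl⟩⟩

theorem Cadlag.add (hx : Cadlag T x) (hy : Cadlag T y) : Cadlag T (x + y) := by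
  refine ⟨fun t ht => (hx.1 t ht).add (hy.1 t ht), fun t ht => ?_⟩
  obtain ⟨l, hl⟩ := hx.2 t ht
  obtain ⟨m, hm⟩ := hy.2 t ht
  exact ⟨l + m, hl.add hm⟩

theorem Cadlag.continuousWithinAt_comp_projIcc (hx : Cadlag T x) (hT : 0 < T) (t : ℝ) :
    ContinuousWithinAt (fun s => x (projIcc 0 T hT.le s)) (Ici t) t := by
  rcases lt_or_ge t T with htT | hTt
  · have hp : (projIcc 0 T hT.le t : ℝ) ∈ Ico 0 T := ⟨(projIcc 0 T hT.le t).2.1, by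
      rcases le_total t 0 with ht | ht
      · rw [projIcc_of_le_left _ ht]; exact hT
      · rw [projIcc_of_mem _ ⟨ht, htT.le⟩]; exact htT⟩
    exact ContinuousWithinAt.comp (hx.1 _ hp)
      (continuous_subtype_val.comp continuous_projIcc).continuousWithinAt
      fun s hs => Subtype.coe_le_coe.2 (monotone_projIcc hT.le (mem_Ici.1 hs))
  · refine (continuousWithinAt_const (b := x T)).congr (fun s hs => ?_) ?_
    · rw [projIcc_of_right_le _ (hTt.trans hs)]
    · rw [projIcc_of_right_le _ hTt]

theorem Cadlag.exists_tendsto_comp_projIcc_nhdsLT (hx : Cadlag T x) (hT : 0 < T) (t : ℝ) :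
    ∃ l, Tendsto (fun s => x (projIcc 0 T hT.le s)) (𝓝[<] t) (𝓝 l) := by
  rcases le_or_gt t 0 with ht0 | ht0
  · refine ⟨x 0, tendsto_const_nhds.congr' (eventually_nhdsWithin_of_forall fun s hs => ?_)⟩
    dsimp only
    rw [projIcc_of_le_left _ ((mem_Iio.1 hs).le.trans ht0)]
  rcases le_or_gt t T with htT | htT
  · obtain ⟨l, hl⟩ := hx.2 t ⟨ht0, htT⟩
    refine ⟨l, hl.congr' (eventually_of_mem (Ioo_mem_nhdsLT ht0) fun s hs => ?_)⟩
    dsimp only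
    rw [projIcc_of_mem _ ⟨hs.1.le, hs.2.le.trans htT⟩]
  · refine ⟨x T, tendsto_const_nhds.congr'
      (eventually_nhdsWithin_of_eventually_nhds (eventually_gt_nhds htT) |>.mono fun s hs => ?_)⟩
    dsimp only
    rw [projIcc_of_right_le _ hs.le]

theorem Cadlag.isBounded_image (hx : Cadlag T x) (hT : 0 < T) : IsBounded (x '' Icc 0 T) := by
  convert isCompact_Icc.isBounded_image_of_continuousWithinAt_Ici
    (hx.continuousWithinAt_comp_projIcc hT) (hx.exists_tendsto_comp_projIcc_nhdsLT hT) using 1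
  exact image_congr fun s hs => by rw [projIcc_of_mem _ hs]

theorem Cadlag.aestronglyMeasurable (hx : Cadlag T x) (hT : 0 < T) :
    AEStronglyMeasurable x (volume.restrict (Icc 0 T)) :=
  (measurable_of_continuousWithinAt_Ici
    (hx.continuousWithinAt_comp_projIcc hT)).aestronglyMeasurable.congr
    ((ae_restrict_mem measurableSet_Icc).mono fun s hs => by simp only [projIcc_of_mem _ hs])

theorem Cadlag.intervalIntegrable (hx : Cadlag T x) (hT : 0 < T) :
    IntervalIntegrable x volume 0 T := by
  obtain ⟨C, hC⟩ := (hx.isBounded_image hT).exists_norm_le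
  rw [intervalIntegrable_iff_integrableOn_Icc_of_le hT.le]
  exact Integrable.of_bound (hx.aestronglyMeasurable hT) C
    (ae_restrict_of_forall_mem measurableSet_Icc fun s hs => hC _ (mem_image_of_mem x hs))

end Cadlag

section Volterra

open scoped NNReal Nat

variable {E : Type*} [NormedAddCommGroup E] [NormedSpace ℝ E] {T : ℝ} {f : ℝ → E → E} {K : ℝ≥0}

section PicardOperator

variable (hT : 0 ≤ T) (hf : ∀ z : C(ℝ, E), IntervalIntegrable (fun s => f s (z s)) volume 0 T)

def volterraMap (z : C(Icc 0 T, E)) : C(Icc 0 T, E) where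
  toFun t := ∫ s in 0..(t : ℝ), f s (z.IccExtend hT s)
  continuous_toFun := by
    refine (intervalIntegral.continuousOn_primitive_interval' (hf (z.IccExtend hT))
      left_mem_uIcc).comp_continuous continuous_subtype_val fun t => ?_
    rw [uIcc_of_le hT]
    exact t.2

theorem volterraMap_apply (z : C(Icc 0 T, E)) (t : Icc 0 T) :
    volterraMap hT hf z t = ∫ s in 0..(t : ℝ), f s (z.IccExtend hT s) :=
  rfl

theorem norm_volterraMap_sub_le (hK : ∀ s ∈ Icc 0 T, LipschitzWith K (f s))
    {u v : C(Icc 0 T, E)} {C : ℝ} {n : ℕ} (huv : ∀ s : Icc 0 T, ‖u s - v s‖ ≤ C * (s : ℝ) ^ n)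
    (t : Icc 0 T) :
    ‖volterraMap hT hf u t - volterraMap hT hf v t‖ ≤ K * C * (t : ℝ) ^ (n + 1) / (n + 1) := by
  have hsub : uIcc 0 (t : ℝ) ⊆ uIcc 0 T := by
    rw [uIcc_of_le hT, uIcc_of_le t.2.1]
    exact Icc_subset_Icc_right t.2.2
  rw [volterraMap_apply, volterraMap_apply, ← intervalIntegral.integral_sub
    ((hf _).mono_set hsub) ((hf _).mono_set hsub)]
  calc ‖∫ s in 0..(t : ℝ), (f s (u.IccExtend hT s) - f s (v.IccExtend hT s))‖
      ≤ ∫ s in 0..(t : ℝ), K * C * s ^ n := by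
        refine intervalIntegral.norm_integral_le_of_norm_le t.2.1 (ae_of_all _ fun s hs => ?_)
          ((by fun_prop : Continuous fun s : ℝ => K * C * s ^ n).intervalIntegrable _ _)
        have hsT : s ∈ Icc 0 T := ⟨hs.1.le, hs.2.trans t.2.2⟩
        simp only [ContinuousMap.coe_IccExtend, IccExtend_of_mem _ _ hsT]
        calc ‖f s (u ⟨s, hsT⟩) - f s (v ⟨s, hsT⟩)‖ ≤ K * ‖u ⟨s, hsT⟩ - v ⟨s, hsT⟩‖ :=
              (hK s hsT).norm_sub_le _ _
          _ ≤ K * (C * s ^ n) := mul_le_mul_of_nonneg_left (huv _) K.coe_nonneg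
          _ = K * C * s ^ n := (mul_assoc _ _ _).symm
    _ = K * C * (t : ℝ) ^ (n + 1) / (n + 1) := by
        rw [intervalIntegral.integral_const_mul, integral_pow]
        ring

theorem norm_iterate_volterraMap_sub_le (hK : ∀ s ∈ Icc 0 T, LipschitzWith K (f s)) (n : ℕ)
    (u v : C(Icc 0 T, E)) (t : Icc 0 T) :
    ‖(volterraMap hT hf)^[n] u t - (volterraMap hT hf)^[n] v t‖
      ≤ K ^ n * dist u v * (t : ℝ) ^ n / n ! := by
  induction n generalizing t with
  | zero =>
    simpa [← dist_eq_norm] using ContinuousMap.dist_apply_le_dist t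
  | succ n ih =>
    rw [Function.iterate_succ_apply', Function.iterate_succ_apply']
    refine (norm_volterraMap_sub_le hT hf hK (C := K ^ n * dist u v / n !)
      (fun s => (ih s).trans_eq (by ring)) t).trans_eq ?_
    rw [Nat.factorial_succ]
    push_cast
    field_simp
    ring

theorem dist_iterate_volterraMap_le (hK : ∀ s ∈ Icc 0 T, LipschitzWith K (f s)) (n : ℕ)
    (u v : C(Icc 0 T, E)) :
    dist ((volterraMap hT hf)^[n] u) ((volterraMap hT hf)^[n] v)
      ≤ (K * T) ^ n / n ! * dist u v := by
  refine (ContinuousMap.dist_le (by positivity)).2 fun t => ?_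
  rw [dist_eq_norm]
  calc _ ≤ K ^ n * dist u v * (t : ℝ) ^ n / n ! :=
        norm_iterate_volterraMap_sub_le hT hf hK n u v t
    _ ≤ K ^ n * dist u v * T ^ n / n ! := by gcongr; exacts [t.2.1, t.2.2]
    _ = (K * T) ^ n / n ! * dist u v := by ring

theorem isFixedPt_volterraMap_of_solution {z : ℝ → E} (hz : ContinuousOn z (Icc 0 T))
    (hsol : ∀ t ∈ Icc 0 T, z t = ∫ s in 0..t, f s (z s)) :
    Function.IsFixedPt (volterraMap hT hf) ⟨(Icc 0 T).domRestrict z, hz.domRestrict⟩ := by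
  ext t
  rw [volterraMap_apply]
  refine (intervalIntegral.integral_congr fun s hs => ?_).trans (hsol t t.2).symm
  rw [uIcc_of_le t.2.1] at hs
  simp only [ContinuousMap.coe_IccExtend, IccExtend_of_mem _ _ ⟨hs.1, hs.2.trans t.2.2⟩]
  rfl

theorem existsUnique_isFixedPt_volterraMap [CompleteSpace E]
    (hK : ∀ s ∈ Icc 0 T, LipschitzWith K (f s)) :
    ∃! z, Function.IsFixedPt (volterraMap hT hf) z := by
  obtain ⟨n, hn⟩ := ((FloorSemiring.tendsto_pow_div_factorial_atTop ((K : ℝ) * T)).eventually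
    (gt_mem_nhds one_pos)).exists
  have hcontr : ContractingWith ⟨(K * T) ^ n / n !, by positivity⟩ (volterraMap hT hf)^[n] :=
    ⟨hn, LipschitzWith.of_dist_le_mul (dist_iterate_volterraMap_le hT hf hK n)⟩
  exact ⟨_, hcontr.isFixedPt_fixedPoint_iterate,
    fun z hz => hcontr.fixedPoint_unique (hz.iterate n)⟩

end PicardOperator

theorem continuousOn_of_volterra_solution (hT : 0 ≤ T) {z : ℝ → E}
    (hint : IntervalIntegrable (fun s => f s (z s)) volume 0 T)
    (hsol : ∀ t ∈ Icc 0 T, z t = ∫ s in 0..t, f s (z s)) : ContinuousOn z (Icc 0 T) := by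
  rw [← uIcc_of_le hT] at hsol ⊢
  exact (intervalIntegral.continuousOn_primitive_interval' hint left_mem_uIcc).congr hsol

variable [CompleteSpace E] (hT : 0 ≤ T)
  (hf : ∀ z : C(ℝ, E), IntervalIntegrable (fun s => f s (z s)) volume 0 T)
  (hK : ∀ s ∈ Icc 0 T, LipschitzWith K (f s))
include hT hf hK

theorem exists_continuous_volterra_solution :
    ∃ z : ℝ → E, Continuous z ∧ ∀ t ∈ Icc 0 T, z t = ∫ s in 0..t, f s (z s) := by
  obtain ⟨w, hw, -⟩ := existsUnique_isFixedPt_volterraMap hT hf hK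
  refine ⟨w.IccExtend hT, map_continuous _, fun t ht => ?_⟩
  rw [ContinuousMap.coe_IccExtend, IccExtend_of_mem _ _ ht]
  exact (DFunLike.congr_fun hw ⟨t, ht⟩).symm

theorem eqOn_of_volterra_solution {z₁ z₂ : ℝ → E} (hz₁ : ContinuousOn z₁ (Icc 0 T))
    (hz₂ : ContinuousOn z₂ (Icc 0 T)) (hsol₁ : ∀ t ∈ Icc 0 T, z₁ t = ∫ s in 0..t, f s (z₁ s))
    (hsol₂ : ∀ t ∈ Icc 0 T, z₂ t = ∫ s in 0..t, f s (z₂ s)) : EqOn z₁ z₂ (Icc 0 T) := fun t ht =>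
  DFunLike.congr_fun ((existsUnique_isFixedPt_volterraMap hT hf hK).unique
    (isFixedPt_volterraMap_of_solution hT hf hz₁ hsol₁)
    (isFixedPt_volterraMap_of_solution hT hf hz₂ hsol₂)) ⟨t, ht⟩

end Volterra

/-- pathwise existence and uniqueness of the càdlàg impact process
`Y(t) = y₀ + (Θ(t) − Θ(0)) − ∫_0^t h(Y(s))·α(s) ds` for a Lipschitz resilience
function `h`, a continuous density `α` and a càdlàg strategy `Θ`. -/
theorem impact_process_exists_unique
    (T : ℝ) (hT : 0 < T) (h α Θ : ℝ → ℝ) (L : NNReal)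
    (hh : LipschitzWith L h) (hα : ContinuousOn α (Set.Icc 0 T))
    (y₀ : ℝ) (hΘ : Cadlag T Θ) :
    ∃ Y : ℝ → ℝ, ImpactSol T h α y₀ Θ Y ∧
      ∀ Y' : ℝ → ℝ, ImpactSol T h α y₀ Θ Y' → ∀ t ∈ Set.Icc (0:ℝ) T, Y' t = Y t := by
  set drift : ℝ → ℝ := fun s => y₀ + (Θ s - Θ 0)
  have hdrift : Cadlag T drift := (by fun_prop : Continuous fun x => y₀ + (x - Θ 0)).comp_cadlag hΘ
  have hint : ∀ {Y : ℝ → ℝ}, Cadlag T Y → IntervalIntegrable (fun s => -α s * h (Y s)) volume 0 T :=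
    fun hY => ((hh.continuous.comp_cadlag hY).intervalIntegrable hT).continuousOn_mul
      (by rw [uIcc_of_le hT.le]; exact hα.neg)
  set F : ℝ → ℝ → ℝ := fun s a => -α s * h (drift s + a)
  have hsol_iff : ∀ (Y : ℝ → ℝ) (t : ℝ), (Y t = y₀ + (Θ t - Θ 0) - ∫ s in 0..t, h (Y s) * α s) ↔
      Y t - drift t = ∫ s in 0..t, F s (Y s - drift s) := by
    intro Y t
    simp only [F, drift, add_sub_cancel, neg_mul, intervalIntegral.integral_neg, mul_comm (α _)]
    constructor <;> intro hY <;> linarith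
  obtain ⟨M, hM⟩ := isCompact_Icc.bddAbove_image hα.nnnorm
  have hF_lip : ∀ s ∈ Icc 0 T, LipschitzWith (M * L) (F s) := fun s hs =>
    ((lipschitzWith_smul (-α s)).comp (hh.comp (isometry_add_left (drift s)).lipschitz)).weaken
      (by rw [mul_one, nnnorm_neg]; gcongr; exact hM (mem_image_of_mem _ hs))
  have hF_int (z : C(ℝ, ℝ)) : IntervalIntegrable (fun s => F s (z s)) volume 0 T :=
    hint (hdrift.add z.continuous.cadlag)
  obtain ⟨z, hz, hz_sol⟩ := exists_continuous_volterra_solution hT.le hF_int hF_lip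
  refine ⟨drift + z, ⟨hdrift.add hz.cadlag, fun t ht => (hsol_iff _ t).2 ?_⟩, fun Y' hY' t ht => ?_⟩
  · simpa using hz_sol t ht
  have hY'_sol t (ht : t ∈ Icc 0 T) : Y' t - drift t = ∫ s in 0..t, F s (Y' s - drift s) :=
    (hsol_iff Y' t).1 (hY'.2 t ht)
  have hY'_cont : ContinuousOn (fun t => Y' t - drift t) (Icc 0 T) :=
    continuousOn_of_volterra_solution hT.le (by simpa [F] using hint hY'.1) hY'_sol
  have := eqOn_of_volterra_solution hT.le hF_int hF_lip hY'_cont hz.continuousOn hY'_sol hz_sol ht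
  simp only [Pi.add_apply]
  linarith
end
end

section
/- Let φ : ℝ → ℝ be nondecreasing, right-continuous and nonnegative, with φ(u) = 0 for all u < 0. Set γ₀(t) := φ(t) + t and, for integers n ≥ 1, γ_n(t) := n·∫_{t−1/n}^{t} γ₀(u) du. Then: (i) for every t ∈ ℝ one has γ_n(t) < γ₀(t) < γ_n(t + 1/n); (ii) defining γ⁻¹(s) := inf{u > 0 : γ(u) > s}, for every s ≥ 0 one has γ_n⁻¹(s) − 1/n < γ₀⁻¹(s) < γ_n⁻¹(s). -/
/-!
Write `γ₀ = φ + id` with `φ` nondecreasing. With `h = 1/n`, on the window of length `h` to the left of `t` one has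
`γ₀ u ≤ φ t + u`, and on the window to the right `γ₀ u ≥ φ t + u`; averaging these affine bounds
moves the value by exactly `h / 2`, which gives (i).

For (ii) let `a = γ₀⁻¹(s)`. Then `φ ≤ s - a` on `(-∞, a)`, while `φ ≥ s - a` on `[a, ∞)` by right
continuity, so `γ₀` lies below the line `u ↦ s - a + u` left of `a` and above it right of `a`.
Averaging as before gives `γₙ a ≤ s - h / 2` and `γₙ (a + h) ≥ s + h / 2`, and since `γₙ` is
continuous and nondecreasing both inequalities for its generalized inverse are strict.
-/

open Filter Set MeasureTheory Topology

noncomputable section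

def windowAverage (f : ℝ → ℝ) (h t : ℝ) : ℝ := h⁻¹ * ∫ u in (t - h)..t, f u

def generalizedInverse (g : ℝ → ℝ) (s : ℝ) : ℝ := sInf {u : ℝ | 0 < u ∧ s < g u}

section WindowAverage

variable {f : ℝ → ℝ} {h t c : ℝ}

theorem integral_window_const_add_id :
    ∫ u in (t - h)..t, (c + u) = h * (c + t - h / 2) := by
  rw [intervalIntegral.integral_add intervalIntegrable_const intervalIntegral.intervalIntegrable_id,
    intervalIntegral.integral_const, integral_id, smul_eq_mul]
  ring

theorem windowAverage_le_of_le_affine (hh : 0 < h) (hf : IntervalIntegrable f volume (t - h) t)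
    (hle : ∀ u ∈ Ioo (t - h) t, f u ≤ c + u) : windowAverage f h t ≤ c + t - h / 2 := by
  have hint := intervalIntegral.integral_mono_on_of_le_Ioo (by linarith) hf
    (intervalIntegrable_const.add intervalIntegral.intervalIntegrable_id) hle
  rw [integral_window_const_add_id] at hint
  calc windowAverage f h t ≤ h⁻¹ * (h * (c + t - h / 2)) :=
        mul_le_mul_of_nonneg_left hint (inv_nonneg.mpr hh.le)
    _ = c + t - h / 2 := inv_mul_cancel_left₀ hh.ne' _

theorem le_windowAverage_of_affine_le (hh : 0 < h) (hf : IntervalIntegrable f volume (t - h) t)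
    (hle : ∀ u ∈ Ioo (t - h) t, c + u ≤ f u) : c + t - h / 2 ≤ windowAverage f h t := by
  have hint := intervalIntegral.integral_mono_on_of_le_Ioo (by linarith)
    (intervalIntegrable_const.add intervalIntegral.intervalIntegrable_id) hf hle
  rw [integral_window_const_add_id] at hint
  calc c + t - h / 2 = h⁻¹ * (h * (c + t - h / 2)) := (inv_mul_cancel_left₀ hh.ne' _).symm
    _ ≤ windowAverage f h t := mul_le_mul_of_nonneg_left hint (inv_nonneg.mpr hh.le)

theorem continuous_windowAverage (hf : ∀ a b, IntervalIntegrable f volume a b) :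
    Continuous (windowAverage f h) := by
  have hprim := intervalIntegral.continuous_primitive hf 0
  have hwindow : (fun t => ∫ u in (t - h)..t, f u) =
      fun t => (∫ u in (0 : ℝ)..t, f u) - ∫ u in (0 : ℝ)..(t - h), f u :=
    funext fun t => (intervalIntegral.integral_interval_sub_left (hf _ _) (hf _ _)).symm
  exact continuous_const.mul (hwindow ▸ hprim.sub (hprim.comp (continuous_sub_right h)))

theorem Monotone.windowAverage (hf : Monotone f) (hh : 0 ≤ h) :
    Monotone (windowAverage f h) := by
  intro x y hxy
  have hshift : ∀ t, ∫ u in (t - h)..t, f u = ∫ u in -h..0, f (u + t) := fun t => by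
    rw [intervalIntegral.integral_comp_add_right, neg_add_eq_sub, zero_add]
  simp only [_root_.windowAverage, hshift]
  refine mul_le_mul_of_nonneg_left ?_ (inv_nonneg.mpr hh)
  have hshifted : ∀ d, Monotone fun u => f (u + d) := fun d _ _ huv => hf (by linarith)
  exact intervalIntegral.integral_mono_on (by linarith) (hshifted x).intervalIntegrable
    (hshifted y).intervalIntegrable fun u _ => hf (by linarith)

end WindowAverage

section GeneralizedInverse

variable {g : ℝ → ℝ} {s x : ℝ}

theorem bddBelow_generalizedInverse_set : BddBelow {u : ℝ | 0 < u ∧ s < g u} :=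
  ⟨0, fun _ hu => hu.1.le⟩

theorem generalizedInverse_nonneg : 0 ≤ generalizedInverse g s :=
  Real.sInf_nonneg fun _ hu => hu.1.le

theorem generalizedInverse_lt (hc : ContinuousAt g x) (hx0 : 0 < x) (hx : s < g x) :
    generalizedInverse g s < x := by
  have hnear : ∀ᶠ u in 𝓝[<] x, 0 < u ∧ s < g u :=
    ((lt_mem_nhds hx0).and (hc.eventually (lt_mem_nhds hx))).filter_mono nhdsWithin_le_nhds
  obtain ⟨u, hu, hux⟩ := (hnear.and self_mem_nhdsWithin).exists
  exact (csInf_le bddBelow_generalizedInverse_set hu).trans_lt hux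

theorem lt_generalizedInverse (hg : Monotone g) (hc : ContinuousAt g x) (hx : g x < s)
    (hne : ∃ u, 0 < u ∧ s < g u) : x < generalizedInverse g s := by
  obtain ⟨y, hy, hxy⟩ :=
    ((hc.eventually (gt_mem_nhds hx)).filter_mono nhdsWithin_le_nhds |>.and
      (self_mem_nhdsWithin : Ioi x ∈ 𝓝[>] x)).exists
  refine hxy.trans_le (le_csInf hne fun u hu => ?_)
  by_contra! huy
  exact ((hg huy.le).trans_lt hy).not_gt hu.2

end GeneralizedInverse

section TimeScale

variable {φ : ℝ → ℝ} {s h : ℝ}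

theorem Monotone.add_id (hmono : Monotone φ) : Monotone fun t => φ t + t :=
  hmono.add monotone_id

theorem windowAverage_lt_self (hmono : Monotone φ) (hh : 0 < h) (t : ℝ) :
    windowAverage (fun u => φ u + u) h t < φ t + t := by
  have := windowAverage_le_of_le_affine (t := t) (c := φ t) hh hmono.add_id.intervalIntegrable
    fun u hu => by linarith [hmono hu.2.le]
  linarith

theorem lt_windowAverage_add_self (hmono : Monotone φ) (hh : 0 < h) (t : ℝ) :
    φ t + t < windowAverage (fun u => φ u + u) h (t + h) := by
  have := le_windowAverage_of_affine_le (t := t + h) (c := φ t) hh hmono.add_id.intervalIntegrable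
    fun u hu => by linarith [hmono (add_sub_cancel_right t h ▸ hu.1).le]
  linarith

theorem generalizedInverse_le (hnonneg : ∀ t, 0 ≤ φ t) (hs : 0 ≤ s) :
    generalizedInverse (fun t => φ t + t) s ≤ s :=
  le_of_forall_gt_imp_ge_of_dense fun u hu =>
    csInf_le bddBelow_generalizedInverse_set ⟨by linarith, by linarith [hnonneg u]⟩

theorem apply_le_sub_generalizedInverse (hmono : Monotone φ) (hnonneg : ∀ t, 0 ≤ φ t)
    (hzero : ∀ u < 0, φ u = 0) (hs : 0 ≤ s) {u : ℝ}
    (hu : u < generalizedInverse (fun t => φ t + t) s) :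
    φ u ≤ s - generalizedInverse (fun t => φ t + t) s := by
  set a := generalizedInverse (fun t => φ t + t) s
  rcases lt_or_ge u 0 with hneg | hu0
  · rw [hzero u hneg]
    linarith [generalizedInverse_le hnonneg hs]
  by_contra! hgt
  obtain ⟨v, hv, hva⟩ := exists_between (max_lt hu (show s - φ u < a by linarith))
  obtain ⟨huv, hsv⟩ := max_lt_iff.mp hv
  have hv_out : φ v + v ≤ s := not_lt.mp fun hlt =>
    notMem_of_lt_csInf hva bddBelow_generalizedInverse_set ⟨by linarith, hlt⟩
  linarith [hmono huv.le]

theorem sub_generalizedInverse_le_apply (hmono : Monotone φ)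
    (hrc : ∀ t, Tendsto φ (𝓝[Ici t] t) (𝓝 (φ t))) (hnonneg : ∀ t, 0 ≤ φ t) (s : ℝ) :
    s - generalizedInverse (fun t => φ t + t) s ≤ φ (generalizedInverse (fun t => φ t + t) s) := by
  set a := generalizedInverse (fun t => φ t + t) s
  have hne : {u : ℝ | 0 < u ∧ s < φ u + u}.Nonempty :=
    ⟨|s| + 1, by positivity, by linarith [le_abs_self s, hnonneg (|s| + 1)]⟩
  have habove : ∀ u > a, s < φ u + u := fun u hu => by
    obtain ⟨v, hv, hvu⟩ := exists_lt_of_csInf_lt hne hu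
    linarith [hv.2, hmono hvu.le]
  have hright : Tendsto (fun t => φ t + t) (𝓝[>] a) (𝓝 (φ a + a)) :=
    ((hrc a).add (continuousWithinAt_id (s := Ici a))).mono_left (nhdsWithin_mono a Ioi_subset_Ici_self)
  have := ge_of_tendsto hright (eventually_nhdsWithin_of_forall fun u hu => (habove u hu).le)
  linarith

theorem generalizedInverse_windowAverage_sandwich (hmono : Monotone φ)
    (hrc : ∀ t, Tendsto φ (𝓝[Ici t] t) (𝓝 (φ t))) (hnonneg : ∀ t, 0 ≤ φ t)
    (hzero : ∀ u < 0, φ u = 0) (hh : 0 < h) (hs : 0 ≤ s) :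
    generalizedInverse (windowAverage (fun t => φ t + t) h) s - h <
        generalizedInverse (fun t => φ t + t) s ∧
      generalizedInverse (fun t => φ t + t) s <
        generalizedInverse (windowAverage (fun t => φ t + t) h) s := by
  set a := generalizedInverse (fun t => φ t + t) s
  have hγ₀mono := hmono.add_id
  have hcont : Continuous (windowAverage (fun t => φ t + t) h) :=
    continuous_windowAverage fun _ _ => hγ₀mono.intervalIntegrable
  have hbelow : windowAverage (fun t => φ t + t) h a < s := by
    have := windowAverage_le_of_le_affine (t := a) (c := s - a) hh hγ₀mono.intervalIntegrable fun u hu =>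
      by linarith [apply_le_sub_generalizedInverse hmono hnonneg hzero hs hu.2]
    linarith
  have habove : s < windowAverage (fun t => φ t + t) h (a + h) := by
    have := le_windowAverage_of_affine_le (t := a + h) (c := s - a) hh hγ₀mono.intervalIntegrable fun u hu =>
      by linarith [sub_generalizedInverse_le_apply hmono hrc hnonneg s,
        hmono (add_sub_cancel_right a h ▸ hu.1).le]
    linarith
  have ha : 0 ≤ a := generalizedInverse_nonneg
  constructor
  · linarith [generalizedInverse_lt hcont.continuousAt (by linarith) habove]
  · exact lt_generalizedInverse (hγ₀mono.windowAverage hh.le) hcont.continuousAt hbelow ⟨a + h, by linarith, habove⟩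

end TimeScale

/-- the time-change sandwich for Wong–Zakai averaging. With
`γ₀(t) = φ(t) + t` for a nondecreasing right-continuous nonnegative `φ` vanishing on
`(−∞,0)`, and `γₙ(t) = n ∫_{t−1/n}^t γ₀(u) du`, one has
(i) `γₙ(t) < γ₀(t) < γₙ(t + 1/n)` for every `t`, and
(ii) for the generalized inverses `γ⁻¹(s) = inf{u > 0 : γ(u) > s}`, one has
`γₙ⁻¹(s) − 1/n < γ₀⁻¹(s) < γₙ⁻¹(s)` for every `s ≥ 0`. -/
theorem time_change_sandwich
    (φ : ℝ → ℝ) (hmono : Monotone φ)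
    (hrc : ∀ t : ℝ, Filter.Tendsto φ (nhdsWithin t (Set.Ici t)) (nhds (φ t)))
    (hnonneg : ∀ t : ℝ, 0 ≤ φ t) (hzero : ∀ u < (0:ℝ), φ u = 0)
    (γ₀ : ℝ → ℝ) (hγ₀ : ∀ t, γ₀ t = φ t + t)
    (γ : ℕ → ℝ → ℝ)
    (hγ : ∀ n : ℕ, 1 ≤ n → ∀ t, γ n t = (n:ℝ) * ∫ u in (t - 1/(n:ℝ))..t, γ₀ u) :
    (∀ n : ℕ, 1 ≤ n → ∀ t : ℝ, γ n t < γ₀ t ∧ γ₀ t < γ n (t + 1/(n:ℝ))) ∧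
    (∀ n : ℕ, 1 ≤ n → ∀ s : ℝ, 0 ≤ s →
      sInf {u : ℝ | 0 < u ∧ s < γ n u} - 1/(n:ℝ) < sInf {u : ℝ | 0 < u ∧ s < γ₀ u} ∧
      sInf {u : ℝ | 0 < u ∧ s < γ₀ u} < sInf {u : ℝ | 0 < u ∧ s < γ n u}) := by
  obtain rfl : γ₀ = fun t => φ t + t := funext hγ₀
  have hγn : ∀ n : ℕ, 1 ≤ n → γ n = windowAverage (fun t => φ t + t) (1 / n) := fun n hn =>
    funext fun t => by rw [hγ n hn, windowAverage, one_div, inv_inv]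
  have hpos : ∀ n : ℕ, 1 ≤ n → (0 : ℝ) < 1 / n := fun n hn => by positivity
  refine ⟨fun n hn t => ?_, fun n hn s hs => ?_⟩
  · rw [hγn n hn]
    exact ⟨windowAverage_lt_self hmono (hpos n hn) t, lt_windowAverage_add_self hmono (hpos n hn) t⟩
  · rw [hγn n hn]
    exact generalizedInverse_windowAverage_sandwich hmono hrc hnonneg hzero (hpos n hn) hs
end
end

section
/- Let T > 0 and let α_n, β_n (n ≥ 1) and α₀, β₀ be càdlàg functions on [0,T] such that α_n → α₀ and β_n → β₀ in the Skorokhod J1 topology. Assume the following jump-cancellation property: for every n ≥ 0 and every t ∈ (0,T), if Δα_n(t) ≠ 0 then Δβ_n(t) = −Δα_n(t). Then α_n + β_n → α₀ + β₀ in the Skorokhod J1 topology. -/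
/-!
Use the time changes `ψ n` of `b n` for the sum; with `φ n` those of `a n`, it remains to see
that `a₀ ∘ (φ n)⁻¹ ∘ ψ n` is uniformly close to `a₀`. Fix a partition of `[0,T]` on whose cells
both `a₀` and `b₀` oscillate by at most `ε`; its points are at least some `g > 0` apart.
A large jump of `a₀` at `p` reappears as a large jump of `a n` at `φ n p`, by cancellation as
one of `b n` there, and hence as one of `b₀` at `(ψ n)⁻¹ (φ n p)`. Large jumps only occur at
partition points, and two of them closer than `g` coincide, so `φ n p = ψ n p`. Thus
`(φ n)⁻¹ ∘ ψ n` moves points by less than `g` and never across a large jump of `a₀`, which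
changes `a₀` by at most `4ε`.
-/

open Filter Set MeasureTheory Topology

noncomputable section

/-- The left limit `x(t−)`, with the convention `x(0−) := x(0)`. -/
def leftVal (x : ℝ → ℝ) (t : ℝ) : ℝ := if t ≤ 0 then x 0 else Function.leftLim x t

/-- The jump `Δx(t) = x(t) − x(t−)` of a càdlàg path. -/
def jumpAt (x : ℝ → ℝ) (t : ℝ) : ℝ := x t - leftVal x t

/-- Convergence `xₙ → x₀` in the Skorokhod J1 topology on `D([0,T];ℝ)`. -/
def TendstoJ1 (T : ℝ) (x : ℕ → ℝ → ℝ) (x₀ : ℝ → ℝ) : Prop :=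
  ∃ lam : ℕ → ℝ → ℝ,
    (∀ n, ContinuousOn (lam n) (Set.Icc 0 T) ∧ StrictMonoOn (lam n) (Set.Icc 0 T) ∧
      lam n 0 = 0 ∧ lam n T = T ∧ Set.MapsTo (lam n) (Set.Icc 0 T) (Set.Icc 0 T)) ∧
    (∀ ε > (0:ℝ), ∃ N : ℕ, ∀ n ≥ N, ∀ t ∈ Set.Icc (0:ℝ) T,
      |lam n t - t| ≤ ε ∧ |x n (lam n t) - x₀ t| ≤ ε)

lemma Cadlag.tendsto_leftLim {T : ℝ} {x : ℝ → ℝ} (hx : Cadlag T x) {t : ℝ} (ht : t ∈ Ioc 0 T) :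
    Tendsto x (𝓝[<] t) (𝓝 (Function.leftLim x t)) := by
  obtain ⟨L, hL⟩ := hx.2 t ht
  rwa [leftLim_eq_of_tendsto hL]

lemma jumpAt_of_pos {x : ℝ → ℝ} {t : ℝ} (ht : 0 < t) : jumpAt x t = x t - Function.leftLim x t := by
  simp [jumpAt, leftVal, not_le.2 ht]

lemma Cadlag.abs_leftLim_sub_le {T : ℝ} {x : ℝ → ℝ} (hx : Cadlag T x) {p t c ε : ℝ}
    (hpt : p < t) (ht : t ∈ Ioc 0 T) (h : ∀ w ∈ Ioo p t, |x w - c| ≤ ε) :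
    |Function.leftLim x t - c| ≤ ε :=
  le_of_tendsto ((hx.tendsto_leftLim ht).sub_const c).abs (mem_of_superset (Ioo_mem_nhdsLT hpt) h)

def IsTimeChange (T : ℝ) (φ : ℝ → ℝ) : Prop :=
  ContinuousOn φ (Icc 0 T) ∧ StrictMonoOn φ (Icc 0 T) ∧ φ 0 = 0 ∧ φ T = T ∧
    MapsTo φ (Icc 0 T) (Icc 0 T)

def J1Close (T δ : ℝ) (φ x x₀ : ℝ → ℝ) : Prop :=
  ∀ t ∈ Icc 0 T, |φ t - t| ≤ δ ∧ |x (φ t) - x₀ t| ≤ δ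

namespace IsTimeChange

variable {T : ℝ} {φ : ℝ → ℝ}

lemma surjOn (hφ : IsTimeChange T φ) : SurjOn φ (Icc 0 T) (Icc 0 T) := by
  obtain ⟨hc, -, h0, hT, -⟩ := hφ
  rcases lt_or_ge T 0 with hT0 | hT0
  · simp [Icc_eq_empty_of_lt hT0]
  have h := intermediate_value_Icc hT0 hc
  rwa [h0, hT] at h

lemma lt_iff_lt (hφ : IsTimeChange T φ) {s t : ℝ} (hs : s ∈ Icc 0 T) (ht : t ∈ Icc 0 T) :
    φ s < φ t ↔ s < t :=
  hφ.2.1.lt_iff_lt hs ht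

lemma pos (hφ : IsTimeChange T φ) {t : ℝ} (ht : t ∈ Ioc 0 T) : 0 < φ t := by
  simpa [hφ.2.2.1] using (hφ.lt_iff_lt ⟨le_rfl, ht.1.le.trans ht.2⟩ (Ioc_subset_Icc_self ht)).2 ht.1

lemma lt_self (hφ : IsTimeChange T φ) {t : ℝ} (ht : t ∈ Ico 0 T) : φ t < T := by
  simpa [hφ.2.2.2.1] using
    (hφ.lt_iff_lt (Ico_subset_Icc_self ht) ⟨ht.1.trans ht.2.le, le_rfl⟩).2 ht.2

lemma tendsto_comp_nhdsLT (hφ : IsTimeChange T φ) {t : ℝ} (ht : t ∈ Ioc 0 T) {f : ℝ → ℝ}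
    {L : ℝ} (hf : Tendsto f (𝓝[<] (φ t)) (𝓝 L)) : Tendsto (f ∘ φ) (𝓝[<] t) (𝓝 L) := by
  have hsub : Ioo 0 t ⊆ Icc 0 T := fun w hw => ⟨hw.1.le, hw.2.le.trans ht.2⟩
  have hIoo : Ioo 0 t ∈ 𝓝[<] t := Ioo_mem_nhdsLT ht.1
  refine hf.comp (tendsto_nhdsWithin_iff.2 ⟨?_, mem_of_superset hIoo fun w hw => ?_⟩)
  · exact (hφ.1 t (Ioc_subset_Icc_self ht)).mono_left
      (nhdsWithin_le_of_mem (mem_of_superset hIoo hsub))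
  · exact (hφ.lt_iff_lt (hsub hw) (Ioc_subset_Icc_self ht)).2 hw.2

end IsTimeChange

lemma abs_jumpAt_comp_sub_le {T δ : ℝ} {φ f g : ℝ → ℝ} (hφ : IsTimeChange T φ)
    (hf : Cadlag T f) (hg : Cadlag T g) (h : ∀ w ∈ Icc 0 T, |f (φ w) - g w| ≤ δ)
    {t : ℝ} (ht : t ∈ Ioc 0 T) :
    |jumpAt f (φ t) - jumpAt g t| ≤ 2 * δ := by
  have hφt : φ t ∈ Ioc 0 T := ⟨hφ.pos ht, (hφ.2.2.2.2 (Ioc_subset_Icc_self ht)).2⟩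
  have hleft : |Function.leftLim f (φ t) - Function.leftLim g t| ≤ δ :=
    le_of_tendsto ((hφ.tendsto_comp_nhdsLT ht (hf.tendsto_leftLim hφt)).sub
      (hg.tendsto_leftLim ht)).abs
      (mem_of_superset (Ioo_mem_nhdsLT ht.1) fun w hw => h w ⟨hw.1.le, hw.2.le.trans ht.2⟩)
  rw [jumpAt_of_pos hφt.1, jumpAt_of_pos ht.1]
  have hval := abs_le.1 (h t (Ioc_subset_Icc_self ht))
  have hleft' := abs_le.1 hleft
  exact abs_le.2 ⟨by linarith, by linarith⟩

structure IsOscPartition {E : Type*} [PseudoMetricSpace E] (f : ℝ → E) (T ε : ℝ) (m : ℕ)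
    (u : ℕ → ℝ) : Prop where
  zero : u 0 = 0
  last : u m = T
  lt_succ : ∀ i < m, u i < u (i + 1)
  dist_le : ∀ i < m, ∀ s ∈ Ico (u i) (u (i + 1)), ∀ w ∈ Ico (u i) (u (i + 1)),
    dist (f s) (f w) ≤ ε

namespace IsOscPartition

variable {E : Type*} [PseudoMetricSpace E] {f : ℝ → E} {T ε : ℝ} {m : ℕ} {u : ℕ → ℝ}

lemma strictMonoOn (hu : IsOscPartition f T ε m u) : StrictMonoOn u (Iic m) :=
  strictMonoOn_Iic_of_lt_succ fun i hi => by simpa using hu.lt_succ i hi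

lemma mem_Icc (hu : IsOscPartition f T ε m u) {i : ℕ} (hi : i ≤ m) : u i ∈ Icc 0 T := by
  rw [← hu.zero, ← hu.last]
  exact ⟨hu.strictMonoOn.monotoneOn (Nat.zero_le m) hi (Nat.zero_le i),
    hu.strictMonoOn.monotoneOn hi (mem_Iic.2 le_rfl) hi⟩

lemma nonneg (hu : IsOscPartition f T ε m u) (hT : 0 < T) : 0 ≤ ε := by
  have hm : 0 < m := Nat.pos_of_ne_zero fun hm => hT.ne (by rw [← hu.last, hm, hu.zero])
  have hcell : u 0 ∈ Ico (u 0) (u 1) := ⟨le_rfl, hu.lt_succ 0 hm⟩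
  simpa using hu.dist_le 0 hm _ hcell _ hcell

lemma snoc (hu : IsOscPartition f T ε m u) {q : ℝ} (hTq : T < q)
    (h : ∀ s ∈ Ico T q, ∀ w ∈ Ico T q, dist (f s) (f w) ≤ ε) :
    IsOscPartition f q ε (m + 1) (Function.update u (m + 1) q) where
  zero := by simpa using hu.zero
  last := by simp
  lt_succ i hi := by
    rcases (Nat.lt_succ_iff.1 hi).lt_or_eq with hi | rfl
    · rw [Function.update_of_ne (by omega), Function.update_of_ne (by omega)]
      exact hu.lt_succ i hi
    · simpa [hu.last] using hTq
  dist_le i hi := by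
    rcases (Nat.lt_succ_iff.1 hi).lt_or_eq with hi | rfl
    · rw [Function.update_of_ne (by omega), Function.update_of_ne (by omega)]
      exact hu.dist_le i hi
    · simpa [hu.last] using h

lemma exists_gap (hu : IsOscPartition f T ε m u) : ∃ g > 0, ∀ i < m, g ≤ u (i + 1) - u i := by
  have h : ∀ᶠ g in 𝓝 (0 : ℝ), ∀ i ∈ Finset.range m, g < u (i + 1) - u i :=
    (Finset.eventually_all _).2 fun i hi =>
      eventually_lt_nhds (sub_pos.2 (hu.lt_succ i (Finset.mem_range.1 hi)))
  obtain ⟨g, hg, hg0⟩ := (h.filter_mono nhdsWithin_le_nhds |>.and self_mem_nhdsWithin).exists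
    (f := 𝓝[>] (0 : ℝ))
  exact ⟨g, hg0, fun i hi => (hg i (Finset.mem_range.2 hi)).le⟩

lemma eq_of_abs_sub_lt (hu : IsOscPartition f T ε m u) {g : ℝ}
    (hgap : ∀ i < m, g ≤ u (i + 1) - u i) {i j : ℕ} (hi : i ≤ m) (hj : j ≤ m)
    (hij : |u i - u j| < g) : i = j := by
  wlog hlt : i < j generalizing i j
  · rcases (not_lt.1 hlt).lt_or_eq with h | h
    · exact (this hj hi (by rwa [abs_sub_comm]) h).symm
    · exact h.symm
  have h1 : u (i + 1) ≤ u j := hu.strictMonoOn.monotoneOn (by simp; omega) hj hlt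
  have h2 := hgap i (hlt.trans_le hj)
  have h3 := (abs_lt.1 hij).1
  linarith

lemma exists_dist_le_on_Icc (hu : IsOscPartition f T ε m u) (hε : 0 ≤ ε) {t : ℝ}
    (ht : t ∈ Icc 0 T) :
    ∃ i ≤ m, u i ≤ t ∧ ∀ s ∈ Icc (u i) t, dist (f s) (f t) ≤ ε := by
  classical
  obtain ⟨i, him, hit, hmax⟩ : ∃ i ≤ m, u i ≤ t ∧ ∀ j, i < j → j ≤ m → t < u j :=
    ⟨_, Nat.findGreatest_le m, Nat.findGreatest_spec (P := fun i => u i ≤ t) (Nat.zero_le m)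
      (hu.zero ▸ ht.1), fun j hij hjm => not_le.1 (Nat.findGreatest_is_greatest hij hjm)⟩
  refine ⟨i, him, hit, fun s hs => ?_⟩
  rcases him.lt_or_eq with him | rfl
  · have hti := hmax (i + 1) (Nat.lt_succ_self i) him
    exact hu.dist_le i him s ⟨hs.1, hs.2.trans_lt hti⟩ t ⟨hit, hti⟩
  · have hst : s = t := le_antisymm hs.2 (ht.2.trans (hu.last ▸ hs.1))
    rwa [hst, dist_self]

end IsOscPartition

section Existence

variable {E : Type*} [PseudoMetricSpace E] {f : ℝ → E} {ε : ℝ}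

lemma exists_Ioo_dist_lt_of_tendsto_nhdsLT {r : ℝ} {L : E} (h : Tendsto f (𝓝[<] r) (𝓝 L))
    (hε : 0 < ε) : ∃ p < r, ∀ s ∈ Ioo p r, ∀ w ∈ Ioo p r, dist (f s) (f w) < ε := by
  obtain ⟨S, hS, hdist⟩ := (Metric.cauchy_iff.1 h.cauchy_map).2 ε hε
  obtain ⟨p, hp, hsub⟩ := mem_nhdsLT_iff_exists_Ioo_subset.1 hS
  exact ⟨p, hp, fun s hs w hw => hdist _ (hsub hs) _ (hsub hw)⟩

lemma exists_Ico_dist_lt_of_tendsto_nhdsGE {r : ℝ} {L : E} (h : Tendsto f (𝓝[≥] r) (𝓝 L))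
    (hε : 0 < ε) : ∃ q > r, ∀ s ∈ Ico r q, ∀ w ∈ Ico r q, dist (f s) (f w) < ε := by
  obtain ⟨S, hS, hdist⟩ := (Metric.cauchy_iff.1 h.cauchy_map).2 ε hε
  obtain ⟨q, hq, hsub⟩ := mem_nhdsGE_iff_exists_Ico_subset.1 hS
  exact ⟨q, hq, fun s hs w hw => hdist _ (hsub hs) _ (hsub hw)⟩

/-- Real induction: the supremum of the `r` for which `[0,r]` admits such a partition is
attained, and it cannot be less than `T`. -/
lemma exists_isOscPartition {T : ℝ} (hT : 0 ≤ T) (hε : 0 < ε)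
    (hright : ∀ t ∈ Ico 0 T, Tendsto f (𝓝[≥] t) (𝓝 (f t)))
    (hleft : ∀ t ∈ Ioc 0 T, ∃ L, Tendsto f (𝓝[<] t) (𝓝 L)) :
    ∃ m u, IsOscPartition f T ε m u := by
  set S := {r ∈ Icc 0 T | ∃ m u, IsOscPartition f r ε m u}
  have h0 : 0 ∈ S := ⟨left_mem_Icc.2 hT, 0, fun _ => 0, rfl, rfl, by simp, by simp⟩
  have hbdd : BddAbove S := ⟨T, fun r hr => hr.1.2⟩
  set r := sSup S
  have hr : r ∈ Icc 0 T := ⟨le_csSup hbdd h0, csSup_le ⟨0, h0⟩ fun r hr => hr.1.2⟩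
  have hrS : r ∈ S := by
    rcases hr.1.eq_or_lt with hr0 | hr0
    · rwa [← hr0]
    obtain ⟨L, hL⟩ := hleft r ⟨hr0, hr.2⟩
    obtain ⟨p, hpr, hp⟩ := exists_Ioo_dist_lt_of_tendsto_nhdsLT hL hε
    obtain ⟨q, hqS, hpq⟩ := exists_lt_of_lt_csSup ⟨0, h0⟩ hpr
    rcases (le_csSup hbdd hqS).eq_or_lt with hqr | hqr
    · rwa [hqr] at hqS
    obtain ⟨m, u, hu⟩ := hqS.2
    exact ⟨hr, _, _, hu.snoc hqr fun s hs w hw =>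
      (hp s ⟨hpq.trans_le hs.1, hs.2⟩ w ⟨hpq.trans_le hw.1, hw.2⟩).le⟩
  rcases hr.2.eq_or_lt with hrT | hrT
  · exact hrT ▸ hrS.2
  obtain ⟨q, hrq, hq⟩ := exists_Ico_dist_lt_of_tendsto_nhdsGE (hright r ⟨hr.1, hrT⟩) hε
  obtain ⟨m, u, hu⟩ := hrS.2
  have hqS : min q T ∈ S := ⟨⟨hr.1.trans (lt_min hrq hrT).le, min_le_right q T⟩, _, _,
    hu.snoc (lt_min hrq hrT) fun s hs w hw =>
      (hq s ⟨hs.1, hs.2.trans_le (min_le_left q T)⟩ w ⟨hw.1, hw.2.trans_le (min_le_left q T)⟩).le⟩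
  exact absurd (le_csSup hbdd hqS) (not_le.2 (lt_min hrq hrT))

end Existence

lemma Cadlag.exists_common_isOscPartition {T ε : ℝ} {x y : ℝ → ℝ} (hx : Cadlag T x)
    (hy : Cadlag T y) (hT : 0 ≤ T) (hε : 0 < ε) :
    ∃ m u, IsOscPartition x T ε m u ∧ IsOscPartition y T ε m u := by
  obtain ⟨m, u, hu⟩ := exists_isOscPartition (f := fun t => (x t, y t)) hT hε
    (fun t ht => (hx.1 t ht).prodMk_nhds (hy.1 t ht))
    (fun t ht => by
      obtain ⟨L, hL⟩ := hx.2 t ht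
      obtain ⟨L', hL'⟩ := hy.2 t ht
      exact ⟨(L, L'), hL.prodMk_nhds hL'⟩)
  refine ⟨m, u, ⟨hu.zero, hu.last, hu.lt_succ, fun i hi s hs w hw => ?_⟩,
    ⟨hu.zero, hu.last, hu.lt_succ, fun i hi s hs w hw => ?_⟩⟩
  · exact (le_max_left _ _).trans (hu.dist_le i hi s hs w hw)
  · exact (le_max_right _ _).trans (hu.dist_le i hi s hs w hw)

namespace IsOscPartition

variable {T ε : ℝ} {m : ℕ} {u : ℕ → ℝ} {x : ℝ → ℝ}

lemma exists_eq_of_lt_abs_jumpAt (hu : IsOscPartition x T ε m u) (hx : Cadlag T x) {t : ℝ}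
    (ht : t ∈ Ioc 0 T) (hjump : ε < |jumpAt x t|) : ∃ i ≤ m, u i = t := by
  obtain ⟨i, him, hit, hcell⟩ :=
    hu.exists_dist_le_on_Icc (hu.nonneg (ht.1.trans_le ht.2)) (Ioc_subset_Icc_self ht)
  refine ⟨i, him, hit.eq_or_lt.resolve_right fun hlt => hjump.not_ge ?_⟩
  rw [jumpAt_of_pos ht.1, abs_sub_comm]
  exact hx.abs_leftLim_sub_le hlt ht fun w hw => hcell w ⟨hw.1.le, hw.2.le⟩

/-- At worst `s` and `t` straddle one partition point, where the jump is at most `2 * ε`. -/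
lemma abs_sub_le_of_forall_lt_iff (hu : IsOscPartition x T ε m u) (hx : Cadlag T x)
    (hε : 0 ≤ ε) {g : ℝ} (hgap : ∀ i < m, g ≤ u (i + 1) - u i) {s t : ℝ} (hs : s ∈ Icc 0 T)
    (ht : t ∈ Icc 0 T) (hst : |s - t| < g)
    (hsep : ∀ p ∈ Ioc 0 T, 2 * ε < |jumpAt x p| → (s < p ↔ t < p)) :
    |x s - x t| ≤ 4 * ε := by
  wlog hle : s ≤ t generalizing s t
  · rw [abs_sub_comm]
    exact this ht hs (by rwa [abs_sub_comm]) (fun p hp h => (hsep p hp h).symm) (le_of_not_ge hle)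
  obtain ⟨i, him, hit, hcell⟩ := hu.exists_dist_le_on_Icc hε ht
  rcases le_or_gt (u i) s with his | hsi
  · exact (hcell s ⟨his, hle⟩).trans (by linarith)
  obtain ⟨j, rfl⟩ : ∃ j, i = j + 1 :=
    Nat.exists_eq_succ_of_ne_zero fun hi => by linarith [hu.zero, hs.1, hi ▸ hsi]
  have hjm : j < m := him
  have hp : u (j + 1) ∈ Ioc 0 T := ⟨hs.1.trans_lt hsi, (hu.mem_Icc him).2⟩
  have hjump : |jumpAt x (u (j + 1))| ≤ 2 * ε :=
    not_lt.1 fun hbig => ((hsep _ hp hbig).1 hsi).not_ge hit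
  have hjs : u j ≤ s := by linarith [hgap j hjm, (abs_lt.1 hst).1]
  have hleft : |Function.leftLim x (u (j + 1)) - x s| ≤ ε :=
    hx.abs_leftLim_sub_le (hu.lt_succ j hjm) hp fun w hw =>
      hu.dist_le j hjm w ⟨hw.1.le, hw.2⟩ s ⟨hjs, hsi⟩
  rw [jumpAt_of_pos hp.1] at hjump
  have h₁ := abs_le.1 hjump
  have h₂ := abs_le.1 hleft
  have h₃ := abs_le.1 (hcell _ ⟨le_rfl, hit⟩)
  exact abs_le.2 ⟨by linarith, by linarith⟩

end IsOscPartition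

section JumpCancellation

variable {T ε δ g : ℝ} {m : ℕ} {u : ℕ → ℝ} {a b a₀ b₀ φ ψ : ℝ → ℝ}

lemma apply_eq_apply_of_lt_abs_jumpAt (ha : Cadlag T a) (hb : Cadlag T b) (ha₀ : Cadlag T a₀)
    (hb₀ : Cadlag T b₀) (hφ : IsTimeChange T φ) (hψ : IsTimeChange T ψ)
    (haφ : J1Close T δ φ a a₀) (hbψ : J1Close T δ ψ b b₀)
    (hcancel : ∀ t ∈ Ioo 0 T, jumpAt a t ≠ 0 → jumpAt b t = -jumpAt a t)
    (hua : IsOscPartition a₀ T ε m u) (hub : IsOscPartition b₀ T ε m u)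
    (hgap : ∀ i < m, g ≤ u (i + 1) - u i) (hδg : 2 * δ < g) (hδε : 4 * δ < ε)
    {p : ℝ} (hp : p ∈ Ioc 0 T) (hbig : 2 * ε < |jumpAt a₀ p|) : φ p = ψ p := by
  rcases hp.2.eq_or_lt with rfl | hpT
  · rw [hφ.2.2.2.1, hψ.2.2.2.1]
  have hδ : 0 ≤ δ := (abs_nonneg _).trans (haφ p (Ioc_subset_Icc_self hp)).1
  have hφp : φ p ∈ Ioo 0 T := ⟨hφ.pos hp, hφ.lt_self ⟨hp.1.le, hpT⟩⟩
  have hja : 2 * ε - 2 * δ < |jumpAt a (φ p)| := by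
    have := abs_jumpAt_comp_sub_le hφ ha ha₀ (fun w hw => (haφ w hw).2) hp
    linarith [abs_sub_abs_le_abs_sub (jumpAt a₀ p) (jumpAt a (φ p)), abs_sub_comm (jumpAt a₀ p)
      (jumpAt a (φ p))]
  have hjb : jumpAt b (φ p) = -jumpAt a (φ p) :=
    hcancel _ hφp fun h => by rw [h, abs_zero] at hja; linarith
  obtain ⟨v, hv, hψv⟩ := hψ.surjOn (Ioo_subset_Icc_self hφp)
  have hv0 : 0 < v := hv.1.lt_of_ne <| by
    rintro rfl
    rw [hψ.2.2.1] at hψv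
    exact hφp.1.ne hψv
  have hjb₀ : ε < |jumpAt b₀ v| := by
    have := abs_jumpAt_comp_sub_le hψ hb hb₀ (fun w hw => (hbψ w hw).2) ⟨hv0, hv.2⟩
    rw [hψv, hjb] at this
    linarith [abs_sub_abs_le_abs_sub (-jumpAt a (φ p)) (jumpAt b₀ v), abs_neg (jumpAt a (φ p))]
  obtain ⟨j, hjm, rfl⟩ := hub.exists_eq_of_lt_abs_jumpAt hb₀ ⟨hv0, hv.2⟩ hjb₀
  obtain ⟨k, hkm, rfl⟩ :=
    hua.exists_eq_of_lt_abs_jumpAt ha₀ hp (by linarith [abs_nonneg (jumpAt a₀ p)])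
  obtain rfl : j = k := hua.eq_of_abs_sub_lt hgap hjm hkm <| by
    have h₁ := abs_le.1 (hbψ _ (hub.mem_Icc hjm)).1
    have h₂ := abs_le.1 (haφ _ (hua.mem_Icc hkm)).1
    rw [hψv] at h₁
    exact abs_lt.2 ⟨by linarith, by linarith⟩
  exact hψv.symm

lemma abs_comp_sub_le_of_jumpAt_cancel (ha : Cadlag T a) (hb : Cadlag T b) (ha₀ : Cadlag T a₀)
    (hb₀ : Cadlag T b₀) (hφ : IsTimeChange T φ) (hψ : IsTimeChange T ψ)
    (haφ : J1Close T δ φ a a₀) (hbψ : J1Close T δ ψ b b₀)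
    (hcancel : ∀ t ∈ Ioo 0 T, jumpAt a t ≠ 0 → jumpAt b t = -jumpAt a t)
    (hua : IsOscPartition a₀ T ε m u) (hub : IsOscPartition b₀ T ε m u)
    (hgap : ∀ i < m, g ≤ u (i + 1) - u i) (hδg : 2 * δ < g) (hδε : 4 * δ < ε)
    {t : ℝ} (ht : t ∈ Icc 0 T) : |a (ψ t) - a₀ t| ≤ δ + 4 * ε := by
  obtain ⟨t', ht', hφt'⟩ := hφ.surjOn (hψ.2.2.2.2 ht)
  have hδ : 0 ≤ δ := (abs_nonneg _).trans (haφ t ht).1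
  have hclose : |t' - t| < g := by
    have h₁ := abs_le.1 (haφ t' ht').1
    have h₂ := abs_le.1 (hbψ t ht).1
    rw [hφt'] at h₁
    exact abs_lt.2 ⟨by linarith, by linarith⟩
  have hsep (p : ℝ) (hp : p ∈ Ioc 0 T) (hbig : 2 * ε < |jumpAt a₀ p|) : t' < p ↔ t < p := by
    rw [← hφ.lt_iff_lt ht' (Ioc_subset_Icc_self hp), hφt',
      apply_eq_apply_of_lt_abs_jumpAt ha hb ha₀ hb₀ hφ hψ haφ hbψ hcancel hua hub hgap hδg hδε hp
        hbig, hψ.lt_iff_lt ht (Ioc_subset_Icc_self hp)]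
  calc |a (ψ t) - a₀ t| ≤ |a (φ t') - a₀ t'| + |a₀ t' - a₀ t| := by
        rw [hφt']; exact abs_sub_le _ _ _
    _ ≤ δ + 4 * ε := add_le_add (haφ t' ht').2
        (hua.abs_sub_le_of_forall_lt_iff ha₀ (by linarith) hgap ht' ht hclose hsep)

end JumpCancellation

theorem J1_addition_with_jump_cancellation_general
    (T : ℝ) (hT : 0 < T)
    (a b : ℕ → ℝ → ℝ) (a₀ b₀ : ℝ → ℝ)
    (ha : ∀ n, Cadlag T (a n)) (hb : ∀ n, Cadlag T (b n))
    (ha₀ : Cadlag T a₀) (hb₀ : Cadlag T b₀)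
    (haconv : TendstoJ1 T a a₀) (hbconv : TendstoJ1 T b b₀)
    (hcancel : ∀ n, ∀ t ∈ Set.Ioo (0:ℝ) T,
      jumpAt (a n) t ≠ 0 → jumpAt (b n) t = -jumpAt (a n) t) :
    TendstoJ1 T (fun n s => a n s + b n s) (fun s => a₀ s + b₀ s) := by
  obtain ⟨φ, hφ, hφconv⟩ := haconv
  obtain ⟨ψ, hψ, hψconv⟩ := hbconv
  refine ⟨ψ, hψ, fun ε hε => ?_⟩
  obtain ⟨m, u, hua, hub⟩ :=
    ha₀.exists_common_isOscPartition hb₀ hT.le (by positivity : 0 < ε / 8)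
  obtain ⟨g, hg, hgap⟩ := hua.exists_gap
  set δ := min (ε / 64) (g / 4)
  have hδε : δ ≤ ε / 64 := min_le_left _ _
  have hδg : δ ≤ g / 4 := min_le_right _ _
  obtain ⟨N₁, hN₁⟩ := hφconv δ (lt_min (by positivity) (by positivity))
  obtain ⟨N₂, hN₂⟩ := hψconv δ (lt_min (by positivity) (by positivity))
  refine ⟨max N₁ N₂, fun n hn t ht => ?_⟩
  have hφn : J1Close T δ (φ n) (a n) a₀ := hN₁ n (le_of_max_le_left hn)
  have hψn : J1Close T δ (ψ n) (b n) b₀ := hN₂ n (le_of_max_le_right hn)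
  have ha_close := abs_comp_sub_le_of_jumpAt_cancel (ha n) (hb n) ha₀ hb₀ (hφ n) (hψ n) hφn hψn
    (hcancel n) hua hub hgap (by linarith) (by linarith) ht
  have hb_close := (hψn t ht).2
  refine ⟨(hψn t ht).1.trans (by linarith), ?_⟩
  calc |a n (ψ n t) + b n (ψ n t) - (a₀ t + b₀ t)|
      ≤ |a n (ψ n t) - a₀ t| + |b n (ψ n t) - b₀ t| := by
        rw [add_sub_add_comm]; exact abs_add_le _ _
    _ ≤ ε := by linarith

/-- allowed cancellation of jumps for J1. If `αₙ → α₀` and `βₙ → β₀` in J1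
and for every `n ≥ 0` (including the limits) every jump of `αₙ` in `(0,T)` is exactly
cancelled by the jump of `βₙ`, then `αₙ + βₙ → α₀ + β₀` in J1. -/
theorem J1_addition_with_jump_cancellation
    (T : ℝ) (hT : 0 < T)
    (a b : ℕ → ℝ → ℝ) (a₀ b₀ : ℝ → ℝ)
    (ha : ∀ n, Cadlag T (a n)) (hb : ∀ n, Cadlag T (b n))
    (ha₀ : Cadlag T a₀) (hb₀ : Cadlag T b₀)
    (haconv : TendstoJ1 T a a₀) (hbconv : TendstoJ1 T b b₀)
    (hcancel : ∀ n, ∀ t ∈ Set.Ioo (0:ℝ) T,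
      jumpAt (a n) t ≠ 0 → jumpAt (b n) t = -jumpAt (a n) t)
    (hcancel₀ : ∀ t ∈ Set.Ioo (0:ℝ) T,
      jumpAt a₀ t ≠ 0 → jumpAt b₀ t = -jumpAt a₀ t) :
    TendstoJ1 T (fun n s => a n s + b n s) (fun s => a₀ s + b₀ s) :=
  J1_addition_with_jump_cancellation_general T hT a b a₀ b₀ ha hb ha₀ hb₀ haconv hbconv hcancel
end
end

section
/- Fix constants β > 0, σ̂ > 0 and 0 < λ_min ≤ λ_max. Let f : ℝ → ℝ be three times continuously differentiable with f > 0 and f' > 0, such that λ_min ≤ f'(y)/f(y) ≤ λ_max for all y ∈ ℝ and the derivative of y ↦ f'(y)/f(y) is bounded on ℝ. Define k(y) := (σ̂²/2)·f''(y)/f(y) − β − β·y·f'(y)/f(y) and ψ(y) := −β·y·f(y) + (σ̂²/2)·f'(y), assume k is strictly decreasing on ℝ, and let y* be its unique zero. Then ψ is strictly concave on [y*, ∞). -/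
/-!
Since `ψ' = f·k`, and on `(y*, ∞)` the factor `f` is positive and strictly increasing while `k`
is negative and strictly decreasing, `ψ'` is strictly decreasing there; a continuous function
with strictly decreasing derivative on the interior of an interval is strictly concave on it.
-/

open Set

section PsiDerivative

variable {f : ℝ → ℝ} (β c : ℝ)

theorem hasDerivAt_neg_mul_id_mul_add_const_mul_deriv (hf : ContDiff ℝ 2 f) (y : ℝ) :
    HasDerivAt (fun z => -β * z * f z + c * deriv f z)
      (-β * f y - β * y * deriv f y + c * deriv (deriv f) y) y := by
  have hf' : ContDiff ℝ (1 + 1) f := hf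
  have hdf : Differentiable ℝ (deriv f) :=
    (contDiff_succ_iff_deriv.mp hf').2.2.differentiable one_ne_zero
  have hfd : Differentiable ℝ f := hf.differentiable (by norm_num)
  refine ((((hasDerivAt_id y).const_mul (-β)).mul (hfd y).hasDerivAt).add
    ((hdf y).hasDerivAt.const_mul c)).congr_deriv ?_
  simp only [id_eq]
  ring

theorem deriv_neg_mul_id_mul_add_const_mul_deriv (hf : ContDiff ℝ 2 f) {y : ℝ} (hy : f y ≠ 0) :
    deriv (fun z => -β * z * f z + c * deriv f z) y
      = f y * (c * (deriv (deriv f) y / f y) - β - β * y * (deriv f y / f y)) := by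
  rw [(hasDerivAt_neg_mul_id_mul_add_const_mul_deriv β c hf y).deriv]
  field_simp
  ring

end PsiDerivative

theorem StrictMonoOn.mul_strictAntiOn_of_pos_of_neg {s : Set ℝ} {f g : ℝ → ℝ}
    (hf : StrictMonoOn f s) (hg : StrictAntiOn g s)
    (hfpos : ∀ x ∈ s, 0 < f x) (hgneg : ∀ x ∈ s, g x < 0) :
    StrictAntiOn (fun x => f x * g x) s := by
  intro x hx y hy hxy
  have hfx := hfpos x hx
  have hgy := hgneg y hy
  calc f y * g y < f x * g y := mul_lt_mul_of_neg_right (hf hx hy hxy) hgy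
    _ < f x * g x := mul_lt_mul_of_pos_left (hg hx hy hxy) hfx

theorem psi_strictly_concave_right_of_ystar_general
    (β σ : ℝ)
    (f : ℝ → ℝ) (hf : ContDiff ℝ 3 f)
    (hfpos : ∀ y, 0 < f y) (hf' : ∀ y, 0 < deriv f y)
    (k : ℝ → ℝ)
    (hk : ∀ y, k y = σ ^ 2 / 2 * (deriv (deriv f) y / f y)
      - β - β * y * (deriv f y / f y))
    (hkanti : StrictAnti k)
    (ψ : ℝ → ℝ)
    (hψ : ∀ y, ψ y = -β * y * f y + σ ^ 2 / 2 * deriv f y)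
    (ystar : ℝ) (hstar : k ystar = 0) :
    StrictConcaveOn ℝ (Set.Ici ystar) ψ := by
  have hf2 : ContDiff ℝ 2 f := hf.of_le (by norm_num)
  obtain rfl : ψ = fun y => -β * y * f y + σ ^ 2 / 2 * deriv f y := funext hψ
  have hψ' : deriv (fun y => -β * y * f y + σ ^ 2 / 2 * deriv f y) = fun y => f y * k y := by
    ext y
    rw [deriv_neg_mul_id_mul_add_const_mul_deriv β _ hf2 (hfpos y).ne', hk]
  have hcont : Continuous fun y => -β * y * f y + σ ^ 2 / 2 * deriv f y :=
    continuous_iff_continuousAt.mpr fun y =>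
      (hasDerivAt_neg_mul_id_mul_add_const_mul_deriv β _ hf2 y).continuousAt
  have hkneg : ∀ y ∈ Ioi ystar, k y < 0 := fun y hy => hstar ▸ hkanti hy
  refine StrictAntiOn.strictConcaveOn_of_deriv (convex_Ici ystar) hcont.continuousOn ?_
  rw [interior_Ici, hψ']
  exact ((strictMono_of_deriv_pos hf').strictMonoOn _).mul_strictAntiOn_of_pos_of_neg
    (hkanti.strictAntiOn _) (fun y _ => hfpos y) hkneg

/-- with `ψ(y) = −β·y·f(y) + (σ̂²/2)·f'(y)` and
`k(y) = (σ̂²/2)·f''(y)/f(y) − β − β·y·f'(y)/f(y)` strictly decreasing with unique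
zero `y*`, and `f` three times continuously differentiable, the function `ψ` is
strictly concave on `[y*, ∞)`. -/
theorem psi_strictly_concave_right_of_ystar
    (β σ lmin lmax : ℝ) (hβ : 0 < β) (hσ : 0 < σ)
    (hlmin : 0 < lmin) (hll : lmin ≤ lmax)
    (f : ℝ → ℝ) (hf : ContDiff ℝ 3 f)
    (hfpos : ∀ y, 0 < f y) (hf' : ∀ y, 0 < deriv f y)
    (hlam : ∀ y, lmin ≤ deriv f y / f y ∧ deriv f y / f y ≤ lmax)
    (hlam' : ∃ C : ℝ, ∀ y, |deriv (fun z => deriv f z / f z) y| ≤ C)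
    (k : ℝ → ℝ)
    (hk : ∀ y, k y = σ ^ 2 / 2 * (deriv (deriv f) y / f y)
      - β - β * y * (deriv f y / f y))
    (hkanti : StrictAnti k)
    (ψ : ℝ → ℝ)
    (hψ : ∀ y, ψ y = -β * y * f y + σ ^ 2 / 2 * deriv f y)
    (ystar : ℝ) (hstar : k ystar = 0) :
    StrictConcaveOn ℝ (Set.Ici ystar) ψ :=
  psi_strictly_concave_right_of_ystar_general β σ f hf hfpos hf' k hk hkanti ψ hψ ystar hstar
end

section
/- Fix constants β > 0, σ̂ > 0 and 0 < λ_min ≤ λ_max. Let f : ℝ → ℝ be twice continuously differentiable with f > 0 and f' > 0, such that λ_min ≤ f'(y)/f(y) ≤ λ_max for all y ∈ ℝ and the derivative of y ↦ f'(y)/f(y) is bounded on ℝ. Define k(y) := (σ̂²/2)·f''(y)/f(y) − β − β·y·f'(y)/f(y) and ψ(y) := −β·y·f(y) + (σ̂²/2)·f'(y), assume k is strictly decreasing on ℝ, and let y* be its unique zero. Then for every y ∈ ℝ: inf{ a·y + b : a, b ∈ ℝ such that ψ(x) ≤ a·x + b for all x ∈ ℝ } = ψ(max(y, y*)). In other words,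 the pointwise infimum of all affine majorants of ψ (its concave hull) equals the function y ↦ ψ(y ∨ y*). -/
/-!
Since `ψ' = f·k`, `ψ` increases up to `y*`, and beyond `y*` the derivative `f·k` decreases
(`f > 0` increases, `k ≤ 0` decreases), so `ψ` is concave on `[y*, ∞)` with its maximum at `y*`.
For `y ≥ y*` the tangent at `y` is therefore an affine majorant touching `ψ` at `y`, and for
`y ≤ y*` the constant `ψ y*` is one. Conversely, `ψ ≥ 0` on `(-∞, 0]` forces every affine
majorant to have nonpositive slope, so its value at `y` is at least its value at `max y y*`.
-/

open Filter Set

def affineMajorantValues (g : ℝ → ℝ) (y : ℝ) : Set ℝ :=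
  {v | ∃ A B : ℝ, (∀ x, g x ≤ A * x + B) ∧ v = A * y + B}

lemma ConcaveOn.le_add_deriv_mul_sub {S : Set ℝ} {f : ℝ → ℝ} {x y : ℝ} (hfc : ConcaveOn ℝ S f)
    (hx : x ∈ S) (hy : y ∈ S) (hfd : DifferentiableAt ℝ f y) :
    f x ≤ f y + deriv f y * (x - y) := by
  rcases lt_trichotomy x y with hxy | rfl | hyx
  · have := hfc.deriv_le_slope hx hy hxy hfd
    rw [slope_def_field, le_div_iff₀ (sub_pos.2 hxy)] at this
    linarith
  · simp
  · have := hfc.slope_le_deriv hy hx hyx hfd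
    rw [slope_def_field, div_le_iff₀ (sub_pos.2 hyx)] at this
    linarith

lemma nonpos_of_forall_le_mul_add {g : ℝ → ℝ} {A B : ℝ} (hbelow : ∀ x ≤ 0, 0 ≤ g x)
    (hAB : ∀ x, g x ≤ A * x + B) : A ≤ 0 := by
  by_contra! hA
  set x := min 0 ((-B - 1) / A)
  have hAx : A * x ≤ -B - 1 := by
    rw [mul_comm, ← le_div_iff₀ hA]
    exact min_le_right _ _
  linarith [hAB x, hbelow x (min_le_left _ _)]

section ConcaveHull

variable {g : ℝ → ℝ} {c : ℝ}

lemma le_add_deriv_mul_sub_of_isMaxOn (hg : Differentiable ℝ g) (hmax : IsMaxOn g univ c)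
    (hanti : AntitoneOn (deriv g) (Ici c)) {y : ℝ} (hy : c ≤ y) (x : ℝ) :
    g x ≤ g y + deriv g y * (x - y) := by
  have hconc : ConcaveOn ℝ (Ici c) g :=
    (hanti.mono interior_subset).concaveOn_of_deriv (convex_Ici c) hg.continuous.continuousOn
      hg.differentiableOn
  have hslope : deriv g y ≤ 0 :=
    (hmax.isLocalMax univ_mem).deriv_eq_zero ▸ hanti self_mem_Ici hy hy
  rcases le_total c x with hx | hx
  · exact hconc.le_add_deriv_mul_sub hx hy (hg y)
  · calc g x ≤ g c := hmax (mem_univ x)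
      _ ≤ g y + deriv g y * (c - y) := hconc.le_add_deriv_mul_sub self_mem_Ici hy (hg y)
      _ ≤ g y + deriv g y * (x - y) := by
        gcongr _ + ?_
        exact mul_le_mul_of_nonpos_left (by linarith) hslope

theorem isLeast_affineMajorantValues_max (hg : Differentiable ℝ g) (hmax : IsMaxOn g univ c)
    (hanti : AntitoneOn (deriv g) (Ici c)) (hbelow : ∀ x ≤ 0, 0 ≤ g x) (y : ℝ) :
    IsLeast (affineMajorantValues g y) (g (max y c)) := by
  set m := max y c
  refine ⟨⟨deriv g m, g m - deriv g m * m, fun x => ?_, ?_⟩, ?_⟩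
  · linarith [le_add_deriv_mul_sub_of_isMaxOn hg hmax hanti (le_max_right y c) x]
  · rcases le_total y c with h | h
    · simp only [m, max_eq_right h, (hmax.isLocalMax univ_mem).deriv_eq_zero]
      ring
    · simp only [m, max_eq_left h]
      ring
  · rintro _ ⟨A, B, hAB, rfl⟩
    calc g m ≤ A * m + B := hAB m
      _ ≤ A * y + B := by
        gcongr ?_ + B
        exact mul_le_mul_of_nonpos_left (le_max_left y c) (nonpos_of_forall_le_mul_add hbelow hAB)

end ConcaveHull

lemma hasDerivAt_psi {β σ : ℝ} {f k ψ : ℝ → ℝ} (hf : ContDiff ℝ 2 f)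
    (hk : ∀ y, k y = σ ^ 2 / 2 * (deriv (deriv f) y / f y) - β - β * y * (deriv f y / f y))
    (hψ : ∀ y, ψ y = -β * y * f y + σ ^ 2 / 2 * deriv f y) {x : ℝ} (hfx : f x ≠ 0) :
    HasDerivAt ψ (f x * k x) x := by
  have hf' : HasDerivAt f (deriv f x) x := (hf.differentiable two_ne_zero x).hasDerivAt
  have hf'' : HasDerivAt (deriv f) (deriv (deriv f) x) x :=
    ((hf.iterate_deriv' 1 1).differentiable one_ne_zero x).hasDerivAt
  rw [show ψ = fun y => -β * (y * f y) + σ ^ 2 / 2 * deriv f y from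
    funext fun y => by rw [hψ]; ring]
  refine ((((hasDerivAt_id' x).mul hf').const_mul (-β)).add
    (hf''.const_mul (σ ^ 2 / 2))).congr_deriv ?_
  rw [hk x]
  field_simp
  ring

theorem concave_hull_of_psi_general
    (β σ : ℝ) (hβ : 0 < β)
    (f : ℝ → ℝ) (hf : ContDiff ℝ 2 f)
    (hfpos : ∀ y, 0 < f y) (hf' : ∀ y, 0 < deriv f y)
    (k : ℝ → ℝ)
    (hk : ∀ y, k y = σ ^ 2 / 2 * (deriv (deriv f) y / f y)
      - β - β * y * (deriv f y / f y))
    (hkanti : StrictAnti k)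
    (ψ : ℝ → ℝ)
    (hψ : ∀ y, ψ y = -β * y * f y + σ ^ 2 / 2 * deriv f y)
    (ystar : ℝ) (hstar : k ystar = 0) :
    ∀ y : ℝ,
      sInf {v : ℝ | ∃ A B : ℝ, (∀ x : ℝ, ψ x ≤ A * x + B) ∧ v = A * y + B}
        = ψ (max y ystar) := by
  intro y
  have hψ' x : HasDerivAt ψ (f x * k x) x := hasDerivAt_psi hf hk hψ (hfpos x).ne'
  have hψd : Differentiable ℝ ψ := fun x => (hψ' x).differentiableAt
  have hderiv : deriv ψ = fun x => f x * k x := funext fun x => (hψ' x).deriv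
  have hk_nonpos : ∀ x ∈ Ici ystar, k x ≤ 0 := fun x hx => hstar ▸ hkanti.antitone hx
  have hmax : IsMaxOn ψ univ ystar := by
    refine isMaxOn_univ_of_deriv hψd.continuous.continuousAt hψd.differentiableOn
      hψd.differentiableOn (fun x hx => ?_) (fun x hx => ?_) <;> rw [hderiv]
    · exact mul_nonneg (hfpos x).le (hstar ▸ hkanti.antitone hx.le)
    · exact mul_nonpos_of_nonneg_of_nonpos (hfpos x).le (hk_nonpos x (mem_Ici.2 hx.le))
  have hanti : AntitoneOn (deriv ψ) (Ici ystar) := hderiv ▸ fun a _ b hb hab =>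
    mul_le_mul_of_nonneg_of_nonpos ((strictMono_of_deriv_pos hf').monotone hab)
      (hkanti.antitone hab) (hfpos a).le (hk_nonpos b hb)
  have hψ_nonneg : ∀ x ≤ 0, 0 ≤ ψ x := fun x hx => by
    rw [hψ]
    have := mul_nonneg (mul_nonneg hβ.le (neg_nonneg.2 hx)) (hfpos x).le
    have := mul_nonneg (by positivity : (0 : ℝ) ≤ σ ^ 2 / 2) (hf' x).le
    linarith
  exact (isLeast_affineMajorantValues_max hψd hmax hanti hψ_nonneg y).csInf_eq

/-- the concave hull of `ψ(y) = −β·y·f(y) + (σ̂²/2)·f'(y)`, i.e. the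
pointwise infimum of all affine majorants of `ψ`, equals `y ↦ ψ(y ∨ y*)`, where `y*`
is the unique zero of the strictly decreasing function
`k(y) = (σ̂²/2)·f''(y)/f(y) − β − β·y·f'(y)/f(y)`. -/
theorem concave_hull_of_psi
    (β σ lmin lmax : ℝ) (hβ : 0 < β) (hσ : 0 < σ)
    (hlmin : 0 < lmin) (hll : lmin ≤ lmax)
    (f : ℝ → ℝ) (hf : ContDiff ℝ 2 f)
    (hfpos : ∀ y, 0 < f y) (hf' : ∀ y, 0 < deriv f y)
    (hlam : ∀ y, lmin ≤ deriv f y / f y ∧ deriv f y / f y ≤ lmax)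
    (hlam' : ∃ C : ℝ, ∀ y, |deriv (fun z => deriv f z / f z) y| ≤ C)
    (k : ℝ → ℝ)
    (hk : ∀ y, k y = σ ^ 2 / 2 * (deriv (deriv f) y / f y)
      - β - β * y * (deriv f y / f y))
    (hkanti : StrictAnti k)
    (ψ : ℝ → ℝ)
    (hψ : ∀ y, ψ y = -β * y * f y + σ ^ 2 / 2 * deriv f y)
    (ystar : ℝ) (hstar : k ystar = 0) :
    ∀ y : ℝ,
      sInf {v : ℝ | ∃ A B : ℝ, (∀ x : ℝ, ψ x ≤ A * x + B) ∧ v = A * y + B}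
        = ψ (max y ystar) :=
  concave_hull_of_psi_general β σ hβ f hf hfpos hf' k hk hkanti ψ hψ ystar hstar
end
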